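/- For the rewrite system R = {321 → 123, 2341 → 4123}, the statistic Σ₁₂₃(π), the sum of positions of occurrences of the Hertzsprung pattern 123 in π, strictly increases under each rewrite step, so →_R is terminating. -/

import Mathlib

/-!
Occurrences of 123 far from the rewritten factor are unaffected by a rewrite, so only the
positions whose window of length three meets the factor matter. An occurrence straddling the
left end of the factor forces the last entry before it to be one less than its first entry,
and one straddling the right end forces the first entry after it to be one more than its
last entry; for both rules these values already lie inside the factor, so in a permutation no
such occurrence exists. Inside the factor, 321 has no occurrence while 123 has one at the
same place, and 2341 has one at its start while 4123 has one a position later. Hence Σ₁₂₃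
increases, and as it is bounded by n² on permutations of length n, no infinite chain exists.
-/

/-- One rewrite step of the pattern-rewriting system R = {321 → 123, 2341 → 4123}. -/
def StepEQ3 (π π' : List ℕ) : Prop :=
  (∃ (l₁ l₂ : List ℕ) (b : ℕ),
      π = l₁ ++ [b+2, b+1, b] ++ l₂ ∧ π' = l₁ ++ [b, b+1, b+2] ++ l₂) ∨
  (∃ (l₁ l₂ : List ℕ) (b : ℕ),
      π = l₁ ++ [b+1, b+2, b+3, b] ++ l₂ ∧ π' = l₁ ++ [b+3, b, b+1, b+2] ++ l₂)

/-- Σ₁₂₃(π): the sum of all (1-based) positions i with π(i+1) = π(i) + 1 and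
π(i+2) = π(i) + 2, i.e. positions of occurrences of the Hertzsprung
pattern 123. -/
def Sigma123 (l : List ℕ) : ℕ :=
  ∑ i ∈ Finset.range l.length,
    if l.getD (i+1) 0 = l.getD i 0 + 1 ∧ l.getD (i+2) 0 = l.getD i 0 + 2
    then i + 1 else 0

lemma Finset.sum_lt_sum_of_sdiff_le {ι M : Type*} [DecidableEq ι] [AddCommMonoid M]
    [PartialOrder M] [IsOrderedCancelAddMonoid M] {s t : Finset ι} {f g : ι → M}
    (hts : t ⊆ s) (hle : ∀ i ∈ s \ t, f i ≤ g i) (hlt : ∑ i ∈ t, f i < ∑ i ∈ t, g i) :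
    ∑ i ∈ s, f i < ∑ i ∈ s, g i := by
  rw [← Finset.sum_sdiff hts, ← Finset.sum_sdiff hts (f := g)]
  exact add_lt_add_of_le_of_lt (Finset.sum_le_sum hle) hlt

/-- Positions are 0-based here, so `Sigma123` weighs an occurrence at `i` by `i + 1`. -/
abbrev Occurs123 (l : List ℕ) (i : ℕ) : Prop :=
  l.getD (i + 1) 0 = l.getD i 0 + 1 ∧ l.getD (i + 2) 0 = l.getD i 0 + 2

def weight123 (l : List ℕ) (i : ℕ) : ℕ := if Occurs123 l i then i + 1 else 0

lemma sigma123_eq_sum_weight123 (l : List ℕ) :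
    Sigma123 l = ∑ i ∈ Finset.range l.length, weight123 l i := rfl

lemma weight123_of_occurs123 {l : List ℕ} {i : ℕ} (h : Occurs123 l i) :
    weight123 l i = i + 1 :=
  if_pos h

lemma weight123_of_not_occurs123 {l : List ℕ} {i : ℕ} (h : ¬ Occurs123 l i) :
    weight123 l i = 0 :=
  if_neg h

lemma weight123_le (l : List ℕ) (i : ℕ) : weight123 l i ≤ i + 1 := by
  unfold weight123; split <;> omega

lemma sigma123_le (l : List ℕ) : Sigma123 l ≤ l.length * l.length := by
  calc Sigma123 l ≤ (Finset.range l.length).card • l.length :=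
        Finset.sum_le_card_nsmul _ _ _ fun i hi =>
          (weight123_le l i).trans (Finset.mem_range.1 hi)
    _ = l.length * l.length := by rw [Finset.card_range, smul_eq_mul]

lemma List.getD_append_length_add {α : Type*} (l r : List α) (d : α) (c : ℕ) :
    (l ++ r).getD (l.length + c) d = r.getD c d := by
  rw [List.getD_append_right _ _ _ _ (by omega), Nat.add_sub_cancel_left]

lemma Occurs123.getD_succ {l : List ℕ} {i j : ℕ} (h : Occurs123 l i) (hij : i ≤ j)
    (hji : j ≤ i + 1) : l.getD (j + 1) 0 = l.getD j 0 + 1 := by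
  obtain rfl | rfl : j = i ∨ j = i + 1 := by omega
  · exact h.1
  · rw [h.1]; exact h.2

lemma Occurs123.getD_zero_eq_succ {p s : List ℕ} {x i : ℕ} (h : Occurs123 (p ++ x :: s) i)
    (hi : i ≤ p.length) (hp : p.length ≤ i + 1) : s.getD 0 0 = x + 1 := by
  have := h.getD_succ hi hp
  rwa [List.getD_append_length_add, List.getD_append_right _ _ _ _ le_rfl, Nat.sub_self,
    List.getD_cons_succ, List.getD_cons_zero] at this

lemma occurs123_append_left_iff {l r : List ℕ} {i : ℕ} (hi : i + 3 ≤ l.length) :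
    Occurs123 (l ++ r) i ↔ Occurs123 l i := by
  simp only [Occurs123, List.getD_append _ _ _ _ (by omega : i < l.length),
    List.getD_append _ _ _ _ (by omega : i + 1 < l.length),
    List.getD_append _ _ _ _ (by omega : i + 2 < l.length)]

lemma occurs123_append_right_iff (l r : List ℕ) (c : ℕ) :
    Occurs123 (l ++ r) (l.length + c) ↔ Occurs123 r c := by
  simp only [Occurs123, Nat.add_assoc, List.getD_append_length_add]

lemma occurs123_append_append_iff (l₁ m l₂ : List ℕ) {c : ℕ} (hc : c + 3 ≤ m.length) :
    Occurs123 (l₁ ++ m ++ l₂) (l₁.length + c) ↔ Occurs123 m c := by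
  rw [List.append_assoc, occurs123_append_right_iff, occurs123_append_left_iff hc]

lemma not_occurs123_append_of_head? {l r : List ℕ} {v i : ℕ} (hN : (l ++ r).Nodup)
    (hr : r.head? = some (v + 1)) (hv : v ∈ r) (hi : i < l.length) (hil : l.length ≤ i + 2) :
    ¬ Occurs123 (l ++ r) i := by
  intro h
  obtain ⟨p, x, rfl⟩ := (List.eq_nil_or_concat' l).resolve_left (by rintro rfl; simp at hi)
  obtain ⟨s, rfl⟩ : ∃ s, r = (v + 1) :: s := by
    cases r <;> simp_all
  rw [List.append_assoc, List.singleton_append] at h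
  have hx : v + 1 = x + 1 := h.getD_zero_eq_succ (by simp at hi; omega) (by simp at hil; omega)
  exact List.disjoint_of_nodup_append hN (by simp [show x = v by omega]) hv

lemma not_occurs123_append_of_getLast? {l r : List ℕ} {v i : ℕ} (hN : (l ++ r).Nodup)
    (hl : l.getLast? = some v) (hv : v + 1 ∈ l) (hi : i < l.length) (hil : l.length ≤ i + 2) :
    ¬ Occurs123 (l ++ r) i := by
  intro h
  obtain ⟨p, x, rfl⟩ := (List.eq_nil_or_concat' l).resolve_left (by rintro rfl; simp at hi)
  obtain rfl : x = v := by simpa using hl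
  rw [List.append_assoc, List.singleton_append] at h
  have hr := h.getD_zero_eq_succ (by simp at hi; omega) (by simp at hil; omega)
  cases r with
  | nil => simp at hr
  | cons a s =>
    exact List.disjoint_of_nodup_append hN hv (by simp [← hr])

lemma occurs123_append_append_congr {l₁ m m' l₂ : List ℕ} (hlen : m.length = m'.length) {i : ℕ}
    (hi : i + 3 ≤ l₁.length ∨ l₁.length + m.length ≤ i) :
    Occurs123 (l₁ ++ m ++ l₂) i ↔ Occurs123 (l₁ ++ m' ++ l₂) i := by
  rcases hi with hi | hi
  · rw [List.append_assoc, List.append_assoc, occurs123_append_left_iff hi,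
      occurs123_append_left_iff hi]
  · obtain ⟨c, rfl⟩ : ∃ c, i = (l₁ ++ m).length + c := ⟨i - (l₁ ++ m).length, by simp; omega⟩
    rw [occurs123_append_right_iff, show (l₁ ++ m).length = (l₁ ++ m').length by simp [hlen],
      occurs123_append_right_iff]

lemma sigma123_lt_of_window {l₁ m m' l₂ : List ℕ} (hlen : m.length = m'.length) {t : Finset ℕ}
    (ht : ∀ i ∈ t, i < l₁.length + m.length)
    (hwin : ∀ i, l₁.length ≤ i + 2 → i < l₁.length + m.length → i ∉ t →
      ¬ Occurs123 (l₁ ++ m ++ l₂) i)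
    (hsum : ∑ i ∈ t, weight123 (l₁ ++ m ++ l₂) i < ∑ i ∈ t, weight123 (l₁ ++ m' ++ l₂) i) :
    Sigma123 (l₁ ++ m ++ l₂) < Sigma123 (l₁ ++ m' ++ l₂) := by
  have hlen' : (l₁ ++ m' ++ l₂).length = (l₁ ++ m ++ l₂).length := by simp [hlen]
  rw [sigma123_eq_sum_weight123, sigma123_eq_sum_weight123, hlen']
  refine Finset.sum_lt_sum_of_sdiff_le (fun i hi => ?_) (fun i hi => ?_) hsum
  · have := ht i hi
    simp only [Finset.mem_range, List.length_append]
    omega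
  · obtain ⟨-, hit⟩ := Finset.mem_sdiff.1 hi
    by_cases hnear : l₁.length ≤ i + 2 ∧ i < l₁.length + m.length
    · rw [weight123_of_not_occurs123 (hwin i hnear.1 hnear.2 hit)]
      exact Nat.zero_le _
    · simp only [weight123, occurs123_append_append_congr hlen (by omega : i + 3 ≤ l₁.length ∨
        l₁.length + m.length ≤ i), le_refl]

lemma sigma123_lt_of_321 (l₁ l₂ : List ℕ) (b : ℕ) (hN : (l₁ ++ [b + 2, b + 1, b] ++ l₂).Nodup) :
    Sigma123 (l₁ ++ [b + 2, b + 1, b] ++ l₂) < Sigma123 (l₁ ++ [b, b + 1, b + 2] ++ l₂) := by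
  have hocc : ¬ Occurs123 (l₁ ++ [b + 2, b + 1, b] ++ l₂) l₁.length :=
    (occurs123_append_append_iff l₁ [b + 2, b + 1, b] l₂ (c := 0) le_rfl).not.2
      (by simp +arith [Occurs123])
  have hocc' : Occurs123 (l₁ ++ [b, b + 1, b + 2] ++ l₂) l₁.length :=
    (occurs123_append_append_iff l₁ [b, b + 1, b + 2] l₂ (c := 0) le_rfl).2
      (by simp +arith [Occurs123])
  refine sigma123_lt_of_window rfl (t := {l₁.length}) (by simp)
    (fun i hi hi' hit => ?_) ?_
  · rcases lt_or_gt_of_ne (Finset.notMem_singleton.1 hit) with h | h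
    · rw [List.append_assoc] at hN ⊢
      exact not_occurs123_append_of_head? (v := b + 1) hN (by simp) (by simp) h hi
    · exact not_occurs123_append_of_getLast? (v := b) hN (by simp) (by simp) (by simpa using hi')
        (by simp; omega)
  · rw [Finset.sum_singleton, Finset.sum_singleton, weight123_of_not_occurs123 hocc,
      weight123_of_occurs123 hocc']
    omega

lemma sigma123_lt_of_2341 (l₁ l₂ : List ℕ) (b : ℕ)
    (hN : (l₁ ++ [b + 1, b + 2, b + 3, b] ++ l₂).Nodup) :
    Sigma123 (l₁ ++ [b + 1, b + 2, b + 3, b] ++ l₂) <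
      Sigma123 (l₁ ++ [b + 3, b, b + 1, b + 2] ++ l₂) := by
  have hocc : ¬ Occurs123 (l₁ ++ [b + 1, b + 2, b + 3, b] ++ l₂) (l₁.length + 1) :=
    (occurs123_append_append_iff l₁ [b + 1, b + 2, b + 3, b] l₂ le_rfl).not.2
      (by simp +arith [Occurs123])
  have hocc' : Occurs123 (l₁ ++ [b + 3, b, b + 1, b + 2] ++ l₂) (l₁.length + 1) :=
    (occurs123_append_append_iff l₁ [b + 3, b, b + 1, b + 2] l₂ le_rfl).2
      (by simp +arith [Occurs123])
  refine sigma123_lt_of_window rfl (t := {l₁.length, l₁.length + 1}) (by simp)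
    (fun i hi hi' hit => ?_) ?_
  · simp only [Finset.mem_insert, Finset.mem_singleton, not_or] at hit
    rcases Nat.lt_or_gt_of_ne hit.1 with h | h
    · rw [List.append_assoc] at hN ⊢
      exact not_occurs123_append_of_head? (v := b) hN (by simp) (by simp) h hi
    · exact not_occurs123_append_of_getLast? (v := b) hN (by simp) (by simp)
        (by simpa using hi') (by simp; omega)
  · have := weight123_le (l₁ ++ [b + 1, b + 2, b + 3, b] ++ l₂) l₁.length
    rw [Finset.sum_pair (by omega), Finset.sum_pair (by omega), weight123_of_not_occurs123 hocc,
      weight123_of_occurs123 hocc']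
    omega

lemma StepEQ3.sigma123_lt {π π' : List ℕ} (h : StepEQ3 π π') (hN : π.Nodup) :
    Sigma123 π < Sigma123 π' := by
  rcases h with ⟨l₁, l₂, b, rfl, rfl⟩ | ⟨l₁, l₂, b, rfl, rfl⟩
  · exact sigma123_lt_of_321 l₁ l₂ b hN
  · exact sigma123_lt_of_2341 l₁ l₂ b hN

lemma StepEQ3.perm {π π' : List ℕ} (h : StepEQ3 π π') : π.Perm π' := by
  rcases h with ⟨l₁, l₂, b, rfl, rfl⟩ | ⟨l₁, l₂, b, rfl, rfl⟩ <;>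
    refine ((List.Perm.append_left l₁ ?_).append_right l₂) <;>
    exact List.perm_iff_count.2 fun x => by simp only [List.count_cons, List.count_nil]; omega

/-- For R = {321 → 123, 2341 → 4123}, Σ₁₂₃ strictly increases under each
rewrite step on permutations; hence the rewrite relation is terminating. -/
theorem stmt_13 :
    (∀ π π' : List ℕ, π.Nodup → StepEQ3 π π' → Sigma123 π < Sigma123 π') ∧
    (∀ f : ℕ → List ℕ, (f 0).Nodup → ¬ ∀ n, StepEQ3 (f n) (f (n+1))) := by
  refine ⟨fun π π' hN h => h.sigma123_lt hN, fun f hf hstep => ?_⟩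
  have hperm : ∀ n, (f n).Perm (f 0) := by
    intro n
    induction n with
    | zero => rfl
    | succ n ih => exact (hstep n).perm.symm.trans ih
  have hmono : StrictMono fun n => Sigma123 (f n) :=
    strictMono_nat_of_lt_succ fun n => (hstep n).sigma123_lt ((hperm n).nodup_iff.2 hf)
  set L := (f 0).length * (f 0).length
  have hbound := sigma123_le (f (L + 1))
  rw [(hperm _).length_eq] at hbound
  have := hmono.id_le (L + 1)
  simp only [id] at this
  omega
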